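/- Holevo gap bound. Let N be a quantum channel with complementary channel N^c, and suppose the ensemble {p_i, ρ_i} achieves the one-shot private capacity of N, i.e. I_p({p_i,ρ_i},N) = P^(1)(N). Then C^(1)(N) ≥ P^(1)(N) + χ({p_i,ρ_i}, N^c), and χ({p_i,ρ_i}, N^c) ≥ 0. -/

import Mathlib

/-!
The Holevo information of `N` splits as `χ(N) = I_p(N) + χ(N^c)` directly from the definitions,
so it remains to see that `χ(N) ≤ C¹(N)` (the supremum is finite because output entropies lie
between `0` and the output dimension) and that `χ(N^c) ≥ 0`. The complementary channel is itself
the map with Kraus operators `b ↦ (K i b a)_{i,a}`, so the latter is concavity of the von Neumann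
entropy. For that, conjugate `ρ = ∑ pᵢ τᵢ` into its eigenbasis `U`: the entropy of each `τᵢ` is at
most the Shannon entropy of the diagonal of `U⋆ τᵢ U`, which is the image of the spectrum of `τᵢ`
under the doubly stochastic matrix `|W_kj|²` of a unitary `W`, and these diagonals average to the
spectrum of `ρ`, so Jensen's inequality for `x ↦ -x log x` finishes.
-/

open Matrix BigOperators Kronecker
open scoped ComplexOrder

/-- von Neumann entropy of a matrix: `-∑ μ_k log μ_k` over the eigenvalues
(junk value `0` if the matrix is not Hermitian). Note `Real.log 0 = 0`. -/
noncomputable def vNEntropy {n : Type*} [Fintype n] [DecidableEq n]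
    (σ : Matrix n n ℂ) : ℝ :=
  if h : σ.IsHermitian then -∑ k, (h.eigenvalues k) * Real.log (h.eigenvalues k) else 0

/-- `K` is a family of Kraus operators for a quantum channel. -/
def IsKraus {dA dB ι : Type*} [Fintype dA] [DecidableEq dA] [Fintype dB] [Fintype ι]
    (K : ι → Matrix dB dA ℂ) : Prop :=
  ∑ i, (K i)ᴴ * K i = 1

/-- Action `X ↦ ∑ i, K i * X * (K i)ᴴ` of the channel with Kraus operators `K`. -/
noncomputable def chanOut {dA dB ι : Type*} [Fintype dA] [Fintype dB] [Fintype ι]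
    (K : ι → Matrix dB dA ℂ) (X : Matrix dA dA ℂ) : Matrix dB dB ℂ :=
  ∑ i, K i * X * (K i)ᴴ

/-- Action of the complementary channel: `(N^c(X))_{ij} = Tr (K i * X * (K j)ᴴ)`. -/
noncomputable def compOut {dA dB ι : Type*} [Fintype dA] [Fintype dB] [Fintype ι]
    (K : ι → Matrix dB dA ℂ) (X : Matrix dA dA ℂ) : Matrix ι ι ℂ :=
  Matrix.of fun i j => Matrix.trace (K i * X * (K j)ᴴ)

/-- A quantum state: positive semidefinite with trace one. -/
def IsQState {n : Type*} [Fintype n] (ρ : Matrix n n ℂ) : Prop :=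
  ρ.PosSemidef ∧ ρ.trace = 1

/-- Coherent information `I_c(ρ, N) = S(N(ρ)) - S(N^c(ρ))`. -/
noncomputable def cohInfo {dA dB ι : Type*} [Fintype dA] [Fintype dB] [DecidableEq dB]
    [Fintype ι] [DecidableEq ι] (K : ι → Matrix dB dA ℂ) (ρ : Matrix dA dA ℂ) : ℝ :=
  vNEntropy (chanOut K ρ) - vNEntropy (compOut K ρ)

/-- One-shot quantum capacity: `Q¹(N) = sup_ρ I_c(ρ, N)` over all states `ρ`. -/
noncomputable def Q1 {dA dB ι : Type*} [Fintype dA] [Fintype dB] [DecidableEq dB]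
    [Fintype ι] [DecidableEq ι] (K : ι → Matrix dB dA ℂ) : ℝ :=
  sSup {x : ℝ | ∃ ρ : Matrix dA dA ℂ, IsQState ρ ∧ cohInfo K ρ = x}

/-- Kraus operators of the tensor product channel `N₁ ⊗ N₂`. -/
noncomputable def tensorKraus {dA₁ dB₁ ι₁ dA₂ dB₂ ι₂ : Type*}
    (K1 : ι₁ → Matrix dB₁ dA₁ ℂ) (K2 : ι₂ → Matrix dB₂ dA₂ ℂ) :
    ι₁ × ι₂ → Matrix (dB₁ × dB₂) (dA₁ × dA₂) ℂ :=
  fun p => K1 p.1 ⊗ₖ K2 p.2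

/-- `IsEnsemble p σs` : the `p i` form a probability vector and each `σs i` is a state. -/
def IsEnsemble {dA : Type*} [Fintype dA] {n : ℕ} (p : Fin n → ℝ)
    (σs : Fin n → Matrix dA dA ℂ) : Prop :=
  (∀ i, 0 ≤ p i) ∧ ∑ i, p i = 1 ∧ ∀ i, IsQState (σs i)

/-- Private information of an ensemble:
`I_p({p_i, ρ_i}, N) = I_c(∑ p_i ρ_i, N) - ∑ p_i I_c(ρ_i, N)`. -/
noncomputable def privInfo {dA dB ι : Type*} [Fintype dA] [Fintype dB] [DecidableEq dB]
    [Fintype ι] [DecidableEq ι] (K : ι → Matrix dB dA ℂ) {n : ℕ} (p : Fin n → ℝ)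
    (σs : Fin n → Matrix dA dA ℂ) : ℝ :=
  cohInfo K (∑ i, (p i : ℂ) • σs i) - ∑ i, p i * cohInfo K (σs i)

/-- One-shot private capacity: the supremum of the private information over all ensembles. -/
noncomputable def P1 {dA dB ι : Type*} [Fintype dA] [Fintype dB] [DecidableEq dB]
    [Fintype ι] [DecidableEq ι] (K : ι → Matrix dB dA ℂ) : ℝ :=
  sSup {x : ℝ | ∃ (n : ℕ) (p : Fin n → ℝ) (σs : Fin n → Matrix dA dA ℂ),
    IsEnsemble p σs ∧ privInfo K p σs = x}

/-- Holevo information of an ensemble with respect to the channel `N`: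
`χ({p_i, ρ_i}, N) = S(N(∑ p_i ρ_i)) - ∑ p_i S(N(ρ_i))`. -/
noncomputable def holevoChan {dA dB ι : Type*} [Fintype dA] [Fintype dB] [DecidableEq dB]
    [Fintype ι] [DecidableEq ι] (K : ι → Matrix dB dA ℂ) {n : ℕ} (p : Fin n → ℝ)
    (σs : Fin n → Matrix dA dA ℂ) : ℝ :=
  vNEntropy (chanOut K (∑ i, (p i : ℂ) • σs i)) - ∑ i, p i * vNEntropy (chanOut K (σs i))

/-- Holevo information of an ensemble with respect to the complementary channel `N^c`. -/
noncomputable def holevoComp {dA dB ι : Type*} [Fintype dA] [Fintype dB] [DecidableEq dB]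
    [Fintype ι] [DecidableEq ι] (K : ι → Matrix dB dA ℂ) {n : ℕ} (p : Fin n → ℝ)
    (σs : Fin n → Matrix dA dA ℂ) : ℝ :=
  vNEntropy (compOut K (∑ i, (p i : ℂ) • σs i)) - ∑ i, p i * vNEntropy (compOut K (σs i))

/-- Holevo capacity: the supremum of the Holevo information over all ensembles. -/
noncomputable def C1 {dA dB ι : Type*} [Fintype dA] [Fintype dB] [DecidableEq dB]
    [Fintype ι] [DecidableEq ι] (K : ι → Matrix dB dA ℂ) : ℝ :=
  sSup {x : ℝ | ∃ (n : ℕ) (p : Fin n → ℝ) (σs : Fin n → Matrix dA dA ℂ),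
    IsEnsemble p σs ∧ holevoChan K p σs = x}

open Real

lemma vNEntropy_eq_sum_negMulLog {m : Type*} [Fintype m] [DecidableEq m] {σ : Matrix m m ℂ}
    (hσ : σ.IsHermitian) : vNEntropy σ = ∑ k, negMulLog (hσ.eigenvalues k) := by
  simp [vNEntropy, hσ, negMulLog]

lemma vNEntropy_le_card {m : Type*} [Fintype m] [DecidableEq m] {σ : Matrix m m ℂ}
    (hσ : σ.PosSemidef) : vNEntropy σ ≤ Fintype.card m := by
  rw [vNEntropy_eq_sum_negMulLog hσ.1, ← nsmul_one, ← Finset.card_univ]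
  refine Finset.sum_le_card_nsmul _ _ _ fun k _ => ?_
  linarith [negMulLog_le_one_sub_self (hσ.eigenvalues_nonneg k), hσ.eigenvalues_nonneg k]

lemma IsQState.sum_eigenvalues {m : Type*} [Fintype m] [DecidableEq m] {σ : Matrix m m ℂ}
    (hσ : IsQState σ) : ∑ k, hσ.1.1.eigenvalues k = 1 := by
  have h := hσ.2
  rw [hσ.1.1.trace_eq_sum_eigenvalues] at h
  simpa using congrArg Complex.re h

lemma IsQState.vNEntropy_nonneg {m : Type*} [Fintype m] [DecidableEq m] {σ : Matrix m m ℂ}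
    (hσ : IsQState σ) : 0 ≤ vNEntropy σ := by
  have hnonneg := hσ.1.eigenvalues_nonneg
  rw [vNEntropy_eq_sum_negMulLog hσ.1.1]
  refine Finset.sum_nonneg fun k _ => negMulLog_nonneg (hnonneg k) ?_
  calc hσ.1.1.eigenvalues k ≤ ∑ j, hσ.1.1.eigenvalues j :=
        Finset.single_le_sum (fun j _ => hnonneg j) (Finset.mem_univ k)
    _ = 1 := hσ.sum_eigenvalues

lemma sum_mul_negMulLog_le_negMulLog_sum {ι : Type*} [Fintype ι] {w x : ι → ℝ}
    (hw : ∀ i, 0 ≤ w i) (hw1 : ∑ i, w i = 1) (hx : ∀ i, 0 ≤ x i) :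
    ∑ i, w i * negMulLog (x i) ≤ negMulLog (∑ i, w i * x i) :=
  concaveOn_negMulLog.le_map_sum (fun i _ => hw i) hw1 (fun i _ => hx i)

lemma sum_negMulLog_le_sum_negMulLog_mulVec {m : Type*} [Fintype m] [DecidableEq m]
    {A : Matrix m m ℝ} (hA : A ∈ doublyStochastic ℝ m) {x : m → ℝ} (hx : ∀ j, 0 ≤ x j) :
    ∑ j, negMulLog (x j) ≤ ∑ k, negMulLog ((A *ᵥ x) k) := by
  obtain ⟨hA0, hrow, hcol⟩ := mem_doublyStochastic_iff_sum.mp hA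
  calc ∑ j, negMulLog (x j) = ∑ k, ∑ j, A k j * negMulLog (x j) := by
        rw [Finset.sum_comm]
        simp_rw [← Finset.sum_mul, hcol, one_mul]
    _ ≤ ∑ k, negMulLog ((A *ᵥ x) k) :=
        Finset.sum_le_sum fun k _ => sum_mul_negMulLog_le_negMulLog_sum (hA0 k) (hrow k) hx

lemma map_normSq_mem_doublyStochastic {m : Type*} [Fintype m] [DecidableEq m]
    {U : Matrix m m ℂ} (hU : U ∈ unitaryGroup m ℂ) :
    U.map Complex.normSq ∈ doublyStochastic ℝ m := by
  have row_sum : ∀ V ∈ unitaryGroup m ℂ, ∀ i, ∑ j, Complex.normSq (V i j) = 1 := by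
    intro V hV i
    have h := congrFun₂ (mem_unitaryGroup_iff.mp hV) i i
    simp only [mul_apply, star_apply, one_apply_eq, Complex.star_def, Complex.mul_conj] at h
    exact_mod_cast h
  refine mem_doublyStochastic_iff_sum.mpr
    ⟨fun i j => Complex.normSq_nonneg _, row_sum U hU, fun j => ?_⟩
  simpa using row_sum _ (Unitary.star_mem hU) j

lemma re_diag_mul_diagonal_mul_star {m : Type*} [Fintype m] [DecidableEq m] (W : Matrix m m ℂ)
    (x : m → ℝ) (k : m) :
    ((W * diagonal (Complex.ofReal ∘ x) * star W) k k).re = (W.map Complex.normSq *ᵥ x) k := by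
  rw [mul_apply]
  simp only [mul_diagonal, star_apply, Function.comp_apply, mulVec, dotProduct, map_apply,
    Complex.re_sum]
  refine Finset.sum_congr rfl fun j _ => ?_
  rw [mul_right_comm, Complex.star_def, Complex.mul_conj, ← Complex.ofReal_mul, Complex.ofReal_re]

lemma vNEntropy_le_sum_negMulLog_re_diag {m : Type*} [Fintype m] [DecidableEq m]
    {τ U : Matrix m m ℂ} (hτ : τ.PosSemidef) (hU : U ∈ unitaryGroup m ℂ) :
    vNEntropy τ ≤ ∑ k, negMulLog ((star U * τ * U) k k).re := by
  set E : Matrix m m ℂ := (hτ.1.eigenvectorUnitary : Matrix m m ℂ)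
  have hconj : star U * τ * U = (star U * E) * diagonal (Complex.ofReal ∘ hτ.1.eigenvalues)
      * star (star U * E) := by
    conv_lhs => rw [hτ.1.spectral_theorem, Unitary.conjStarAlgAut_apply]
    simp only [star_mul, star_star, Matrix.mul_assoc]
    rfl
  have hW : star U * E ∈ unitaryGroup m ℂ :=
    Submonoid.mul_mem _ (Unitary.star_mem hU) hτ.1.eigenvectorUnitary.2
  rw [vNEntropy_eq_sum_negMulLog hτ.1, hconj]
  simp_rw [re_diag_mul_diagonal_mul_star]
  exact sum_negMulLog_le_sum_negMulLog_mulVec (map_normSq_mem_doublyStochastic hW)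
    hτ.eigenvalues_nonneg

lemma sum_mul_vNEntropy_le_vNEntropy_sum {m ι : Type*} [Fintype m] [DecidableEq m] [Fintype ι]
    {p : ι → ℝ} (hp : ∀ i, 0 ≤ p i) (hp1 : ∑ i, p i = 1) {τ : ι → Matrix m m ℂ}
    (hτ : ∀ i, (τ i).PosSemidef) :
    ∑ i, p i * vNEntropy (τ i) ≤ vNEntropy (∑ i, (p i : ℂ) • τ i) := by
  have hρ : (∑ i, (p i : ℂ) • τ i).PosSemidef :=
    posSemidef_sum _ fun i _ => (hτ i).smul (Complex.zero_le_real.mpr (hp i))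
  set U : Matrix m m ℂ := (hρ.1.eigenvectorUnitary : Matrix m m ℂ)
  set x : ι → m → ℝ := fun i k => ((star U * τ i * U) k k).re
  have hx : ∀ i k, 0 ≤ x i k := fun i k => by
    have := ((hτ i).conjTranspose_mul_mul_same U).diag_nonneg (i := k)
    exact (Complex.nonneg_iff.mp this).1
  have heig : ∀ k, hρ.1.eigenvalues k = ∑ i, p i * x i k := fun k => by
    have hdiag := hρ.1.conjStarAlgAut_star_eigenvectorUnitary
    rw [Unitary.conjStarAlgAut_star_apply] at hdiag
    have hkk := congrArg (fun M => (M k k).re) hdiag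
    simpa [x, Finset.mul_sum, Finset.sum_mul, Matrix.sum_apply] using hkk.symm
  calc ∑ i, p i * vNEntropy (τ i) ≤ ∑ i, p i * ∑ k, negMulLog (x i k) := by
        gcongr with i
        · exact hp i
        · exact vNEntropy_le_sum_negMulLog_re_diag (hτ i) hρ.1.eigenvectorUnitary.2
    _ = ∑ k, ∑ i, p i * negMulLog (x i k) := by
        simp_rw [Finset.mul_sum]
        exact Finset.sum_comm
    _ ≤ ∑ k, negMulLog (hρ.1.eigenvalues k) := by
        gcongr with k
        rw [heig k]
        exact sum_mul_negMulLog_le_negMulLog_sum hp hp1 fun i => hx i k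
    _ = vNEntropy (∑ i, (p i : ℂ) • τ i) := (vNEntropy_eq_sum_negMulLog hρ.1).symm

lemma chanOut_posSemidef {dA dB ι : Type*} [Fintype dA] [Fintype dB] [Fintype ι]
    (K : ι → Matrix dB dA ℂ) {σ : Matrix dA dA ℂ} (hσ : σ.PosSemidef) :
    (chanOut K σ).PosSemidef :=
  posSemidef_sum _ fun i _ => hσ.mul_mul_conjTranspose_same (K i)

lemma chanOut_sum_smul {dA dB ι κ : Type*} [Fintype dA] [Fintype dB] [Fintype ι] [Fintype κ]
    (K : ι → Matrix dB dA ℂ) (c : κ → ℂ) (X : κ → Matrix dA dA ℂ) :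
    chanOut K (∑ j, c j • X j) = ∑ j, c j • chanOut K (X j) := by
  simp only [chanOut, Matrix.mul_sum, Matrix.sum_mul, Matrix.mul_smul, Matrix.smul_mul,
    Finset.smul_sum]
  exact Finset.sum_comm

lemma IsKraus.trace_chanOut {dA dB ι : Type*} [Fintype dA] [DecidableEq dA] [Fintype dB]
    [Fintype ι] {K : ι → Matrix dB dA ℂ} (hK : IsKraus K) (σ : Matrix dA dA ℂ) :
    (chanOut K σ).trace = σ.trace := by
  simp_rw [chanOut, trace_sum, trace_mul_cycle (K _), ← trace_sum, ← Finset.sum_mul]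
  rw [hK, one_mul]

lemma IsKraus.isQState_chanOut {dA dB ι : Type*} [Fintype dA] [DecidableEq dA] [Fintype dB]
    [Fintype ι] {K : ι → Matrix dB dA ℂ} (hK : IsKraus K) {σ : Matrix dA dA ℂ}
    (hσ : IsQState σ) : IsQState (chanOut K σ) :=
  ⟨chanOut_posSemidef K hσ.1, (hK.trace_chanOut σ).trans hσ.2⟩

def compKraus {dA dB ι : Type*} (K : ι → Matrix dB dA ℂ) : dB → Matrix ι dA ℂ :=
  fun b => Matrix.of fun i a => K i b a

lemma compOut_eq_chanOut_compKraus {dA dB ι : Type*} [Fintype dA] [Fintype dB] [Fintype ι]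
    (K : ι → Matrix dB dA ℂ) (X : Matrix dA dA ℂ) :
    compOut K X = chanOut (compKraus K) X := by
  ext i j
  simp only [compOut, chanOut, compKraus, of_apply, trace, diag_apply, Matrix.sum_apply, mul_apply,
    conjTranspose_apply]

lemma IsEnsemble.isQState_sum_smul {dA : Type*} [Fintype dA] {n : ℕ} {p : Fin n → ℝ}
    {σs : Fin n → Matrix dA dA ℂ} (hens : IsEnsemble p σs) :
    IsQState (∑ i, (p i : ℂ) • σs i) := by
  obtain ⟨hp, hp1, hσs⟩ := hens
  refine ⟨posSemidef_sum _ fun i _ => (hσs i).1.smul (Complex.zero_le_real.mpr (hp i)), ?_⟩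
  simp [trace_sum, (hσs _).2, ← Complex.ofReal_sum, hp1]

lemma holevoComp_eq_holevoChan_compKraus {dA dB ι : Type*} [Fintype dA] [Fintype dB]
    [DecidableEq dB] [Fintype ι] [DecidableEq ι] (K : ι → Matrix dB dA ℂ) {n : ℕ}
    (p : Fin n → ℝ) (σs : Fin n → Matrix dA dA ℂ) :
    holevoComp K p σs = holevoChan (compKraus K) p σs := by
  simp only [holevoComp, holevoChan, compOut_eq_chanOut_compKraus]

lemma holevoChan_eq_privInfo_add_holevoComp {dA dB ι : Type*} [Fintype dA] [Fintype dB]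
    [DecidableEq dB] [Fintype ι] [DecidableEq ι] (K : ι → Matrix dB dA ℂ) {n : ℕ}
    (p : Fin n → ℝ) (σs : Fin n → Matrix dA dA ℂ) :
    holevoChan K p σs = privInfo K p σs + holevoComp K p σs := by
  simp only [holevoChan, privInfo, holevoComp, cohInfo, mul_sub, Finset.sum_sub_distrib]
  ring

lemma holevoChan_nonneg {dA dB ι : Type*} [Fintype dA] [Fintype dB] [DecidableEq dB]
    [Fintype ι] [DecidableEq ι] (K : ι → Matrix dB dA ℂ) {n : ℕ} {p : Fin n → ℝ}
    {σs : Fin n → Matrix dA dA ℂ} (hens : IsEnsemble p σs) :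
    0 ≤ holevoChan K p σs := by
  obtain ⟨hp, hp1, hσs⟩ := hens
  rw [holevoChan, chanOut_sum_smul, sub_nonneg]
  exact sum_mul_vNEntropy_le_vNEntropy_sum hp hp1 fun i => chanOut_posSemidef K (hσs i).1

lemma IsKraus.holevoChan_le_card {dA dB ι : Type*} [Fintype dA] [DecidableEq dA] [Fintype dB]
    [DecidableEq dB] [Fintype ι] [DecidableEq ι] {K : ι → Matrix dB dA ℂ} (hK : IsKraus K)
    {n : ℕ} {p : Fin n → ℝ} {σs : Fin n → Matrix dA dA ℂ} (hens : IsEnsemble p σs) :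
    holevoChan K p σs ≤ Fintype.card dB := by
  have hout := vNEntropy_le_card (chanOut_posSemidef K hens.isQState_sum_smul.1)
  have hin : 0 ≤ ∑ i, p i * vNEntropy (chanOut K (σs i)) :=
    Finset.sum_nonneg fun i _ =>
      mul_nonneg (hens.1 i) (hK.isQState_chanOut (hens.2.2 i)).vNEntropy_nonneg
  rw [holevoChan]
  linarith

lemma IsKraus.holevoChan_le_C1 {dA dB ι : Type*} [Fintype dA] [DecidableEq dA] [Fintype dB]
    [DecidableEq dB] [Fintype ι] [DecidableEq ι] {K : ι → Matrix dB dA ℂ} (hK : IsKraus K)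
    {n : ℕ} {p : Fin n → ℝ} {σs : Fin n → Matrix dA dA ℂ} (hens : IsEnsemble p σs) :
    holevoChan K p σs ≤ C1 K := by
  refine le_csSup ⟨Fintype.card dB, ?_⟩ ⟨n, p, σs, hens, rfl⟩
  rintro _ ⟨n', p', σs', hens', rfl⟩
  exact hK.holevoChan_le_card hens'

/-- **Holevo gap bound.** If the ensemble `{p_i, ρ_i}` achieves the one-shot private
capacity of `N`, then `C¹(N) ≥ P¹(N) + χ({p_i,ρ_i},N^c)` and `χ({p_i,ρ_i},N^c) ≥ 0`. -/
theorem holevo_gap_bound {dA dB ι : Type*}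
    [Fintype dA] [DecidableEq dA] [Fintype dB] [DecidableEq dB]
    [Fintype ι] [DecidableEq ι]
    (K : ι → Matrix dB dA ℂ) (hK : IsKraus K)
    {n : ℕ} (p : Fin n → ℝ) (σs : Fin n → Matrix dA dA ℂ)
    (hens : IsEnsemble p σs)
    (hach : privInfo K p σs = P1 K) :
    C1 K ≥ P1 K + holevoComp K p σs ∧ 0 ≤ holevoComp K p σs := by
  refine ⟨?_, ?_⟩
  · rw [← hach, ← holevoChan_eq_privInfo_add_holevoComp]
    exact hK.holevoChan_le_C1 hens
  · rw [holevoComp_eq_holevoChan_compKraus]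
    exact holevoChan_nonneg (compKraus K) hens
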